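/- Let G = (V,E,w) be a finite undirected graph with positive integer edge weights, let k > 0, and let {V_1,…,V_z} be the maximal k-edge-connected partition of G. Then: (1) every edge of G whose two endpoints lie in the same part V_i has strength at least k; and (2) every edge of G whose two endpoints lie in different parts has strength strictly less than k. -/
import Mathlib


open Finset

/-- `G[U]` is `k`-edge-connected. -/
def KConnOn {V : Type*} [DecidableEq V] (w : V → V → ℕ) (k : ℕ) (U : Finset V) : Prop :=
  ∀ S : Finset V, S ⊆ U → S.Nonempty → S ≠ U → k ≤ ∑ u ∈ S, ∑ v ∈ U \ S, w u v

/-- `U` is a maximal `k`-edge-connected vertex set. -/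
def IsMaxKConn {V : Type*} [DecidableEq V] (w : V → V → ℕ) (k : ℕ) (U : Finset V) : Prop :=
  KConnOn w k U ∧ ∀ U' : Finset V, U ⊂ U' → ¬ KConnOn w k U'

/-- The strength of the edge `(u,v)`: the largest `k'` for which some `S ⊆ V`
containing `u` and `v` induces a `k'`-edge-connected subgraph. -/
noncomputable def strength {V : Type*} [DecidableEq V] (w : V → V → ℕ) (u v : V) : ℕ :=
  sSup {k' : ℕ | ∃ S : Finset V, u ∈ S ∧ v ∈ S ∧ KConnOn w k' S}

lemma kconn_mono {V : Type*} [DecidableEq V] {w : V → V → ℕ} {k k' : ℕ} {U : Finset V}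
    (h : k ≤ k') (hU : KConnOn w k' U) : KConnOn w k U :=
  fun S hS h1 h2 => h.trans (hU S hS h1 h2)

lemma kconn_step {V : Type*} [DecidableEq V] {w : V → V → ℕ} {k : ℕ} {A S U : Finset V}
    (hA : KConnOn w k A) (hAU : A ⊆ U) (h1 : (S ∩ A).Nonempty) (h2 : S ∩ A ≠ A) :
    k ≤ ∑ u ∈ S, ∑ v ∈ U \ S, w u v := by
  calc k ≤ ∑ u ∈ S ∩ A, ∑ v ∈ A \ (S ∩ A), w u v := hA (S ∩ A) inter_subset_right h1 h2
    _ ≤ ∑ u ∈ S ∩ A, ∑ v ∈ U \ S, w u v := by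
        refine Finset.sum_le_sum fun u _ => Finset.sum_le_sum_of_subset ?_
        intro x hx
        simp only [mem_sdiff, mem_inter] at *
        exact ⟨hAU hx.1, fun hxS => hx.2 ⟨hxS, hx.1⟩⟩
    _ ≤ ∑ u ∈ S, ∑ v ∈ U \ S, w u v := Finset.sum_le_sum_of_subset inter_subset_left

lemma kconn_union {V : Type*} [DecidableEq V] {w : V → V → ℕ} {k : ℕ} {A B : Finset V}
    (hA : KConnOn w k A) (hB : KConnOn w k B) (hx : (A ∩ B).Nonempty) :
    KConnOn w k (A ∪ B) := by
  intro S hS hSne hSneq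
  by_cases hA1 : S ∩ A = A
  · have hAS : A ⊆ S := hA1 ▸ inter_subset_left
    have hB2 : S ∩ B ≠ B := by
      intro h
      exact hSneq (subset_antisymm hS (union_subset hAS (h ▸ inter_subset_left)))
    have hB1 : (S ∩ B).Nonempty := by
      obtain ⟨x, hx⟩ := hx
      simp only [mem_inter] at hx
      exact ⟨x, mem_inter.2 ⟨hAS hx.1, hx.2⟩⟩
    exact kconn_step hB subset_union_right hB1 hB2
  · by_cases hA0 : (S ∩ A).Nonempty
    · exact kconn_step hA subset_union_left hA0 hA1
    · have hSB : S ⊆ B := by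
        intro x hxS
        rcases mem_union.1 (hS hxS) with h | h
        · exact absurd ⟨x, mem_inter.2 ⟨hxS, h⟩⟩ hA0
        · exact h
      have hB1 : (S ∩ B).Nonempty := hSne.imp fun x hxS => mem_inter.2 ⟨hxS, hSB hxS⟩
      have hB2 : S ∩ B ≠ B := by
        intro h
        have hBS : B ⊆ S := h ▸ inter_subset_left
        obtain ⟨x, hx⟩ := hx
        simp only [mem_inter] at hx
        exact hA0 ⟨x, mem_inter.2 ⟨hBS hx.2, hx.1⟩⟩
      exact kconn_step hB subset_union_right hB1 hB2

lemma strength_bdd {V : Type*} [Fintype V] [DecidableEq V] (w : V → V → ℕ) {u v : V}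
    (huv : u ≠ v) : BddAbove {k' : ℕ | ∃ S : Finset V, u ∈ S ∧ v ∈ S ∧ KConnOn w k' S} := by
  refine ⟨∑ a : V, ∑ b : V, w a b, ?_⟩
  rintro k' ⟨S, huS, hvS, hK⟩
  have h1 : ({u} : Finset V) ≠ S := by
    intro h
    rw [← h] at hvS
    exact huv (mem_singleton.1 hvS).symm
  calc k' ≤ ∑ a ∈ ({u} : Finset V), ∑ b ∈ S \ {u}, w a b :=
        hK {u} (singleton_subset_iff.2 huS) (singleton_nonempty u) h1
    _ ≤ ∑ a ∈ ({u} : Finset V), ∑ b : V, w a b :=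
        Finset.sum_le_sum fun a _ => Finset.sum_le_sum_of_subset (subset_univ _)
    _ ≤ ∑ a : V, ∑ b : V, w a b := Finset.sum_le_sum_of_subset (subset_univ _)

lemma max_absorb {V : Type*} [DecidableEq V] {w : V → V → ℕ} {k : ℕ} {U S : Finset V}
    (hU : IsMaxKConn w k U) (hS : KConnOn w k S) (hx : (U ∩ S).Nonempty) : S ⊆ U := by
  have hun : KConnOn w k (U ∪ S) := kconn_union hU.1 hS hx
  by_contra h
  have : U ⊂ U ∪ S := by
    refine ⟨subset_union_left, fun hc => h fun x hxS => hc (mem_union_right _ hxS)⟩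
  exact hU.2 _ this hun

/-- Edges inside a part of the maximal `k`-edge-connected partition have strength
at least `k`; edges between two different parts have strength less than `k`. -/
theorem strength_vs_partition {V : Type*} [Fintype V] [DecidableEq V]
    (w : V → V → ℕ) (hsymm : ∀ u v, w u v = w v u) (hloop : ∀ v, w v v = 0)
    (k : ℕ) (hk : 0 < k) :
    (∀ u v : V, u ≠ v → 0 < w u v →
      (∃ U : Finset V, IsMaxKConn w k U ∧ u ∈ U ∧ v ∈ U) → k ≤ strength w u v) ∧
    (∀ u v : V, u ≠ v → 0 < w u v →
      (∃ U U' : Finset V, IsMaxKConn w k U ∧ IsMaxKConn w k U' ∧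
        u ∈ U ∧ v ∈ U' ∧ U ≠ U') → strength w u v < k) := by
  constructor
  · rintro u v huv hw ⟨U, hU, huU, hvU⟩
    exact le_csSup (strength_bdd w huv) ⟨U, huU, hvU, hU.1⟩
  · rintro u v huv hw ⟨U, U', hU, hU', huU, hvU', hne⟩
    by_contra h
    push_neg at h
    have hpos : 0 < strength w u v := lt_of_lt_of_le hk h
    have hnonempty : {k' : ℕ | ∃ S : Finset V, u ∈ S ∧ v ∈ S ∧ KConnOn w k' S}.Nonempty := by
      by_contra hne'
      rw [Set.not_nonempty_iff_eq_empty] at hne'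
      simp [strength, hne'] at hpos
    obtain ⟨S, huS, hvS, hK⟩ := Nat.sSup_mem hnonempty (strength_bdd w huv)
    have hKk : KConnOn w k S := kconn_mono h hK
    have hSU : S ⊆ U := max_absorb hU hKk ⟨u, mem_inter.2 ⟨huU, huS⟩⟩
    have hSU' : S ⊆ U' := max_absorb hU' hKk ⟨v, mem_inter.2 ⟨hvU', hvS⟩⟩
    have hU'U : U' ⊆ U := max_absorb hU hU'.1 ⟨u, mem_inter.2 ⟨huU, hSU' huS⟩⟩
    have hUU' : U ⊆ U' := max_absorb hU' hU.1 ⟨u, mem_inter.2 ⟨hSU' huS, huU⟩⟩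
    exact hne (subset_antisymm hUU' hU'U)
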